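/- For n = 10 and every k ≥ 1, the number of meaningful compositions satisfies the recurrence f(k+6) = 5·f(k+4) − 6·f(k+2) + f(k). -/

import Mathlib

/-- The relation "to be in composition" on `{1,…,n}`: the composition
`∇_j ∘ ∇_i` is meaningful iff `j = i + 1` or `i + j = n + 1`. -/
def rho (n i j : ℕ) : Prop := j = i + 1 ∨ i + j = n + 1

instance (n i j : ℕ) : Decidable (rho n i j) := by unfold rho; infer_instance

/-- A `k`-tuple `(i₁,…,i_k) ∈ {1,…,n}^k` (encoded as `g : Fin k → Fin n`, where
`i_t = (g (t-1) : ℕ) + 1`) is a meaningful composition iff every pair of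
consecutive entries is related by `rho`. -/
def Meaningful (n k : ℕ) (g : Fin k → Fin n) : Prop :=
  ∀ t : Fin (k - 1),
    rho n (((g ⟨t, lt_of_lt_of_le t.2 (Nat.sub_le k 1)⟩ : Fin n) : ℕ) + 1)
          (((g ⟨(t : ℕ) + 1, Nat.add_lt_of_lt_sub t.2⟩ : Fin n) : ℕ) + 1)

instance (n k : ℕ) (g : Fin k → Fin n) : Decidable (Meaningful n k g) := by
  unfold Meaningful; infer_instance

/-- `numComp n k` is the number of meaningful compositions of order `k` on `ℝⁿ`. -/
def numComp (n k : ℕ) : ℕ := Fintype.card {g : Fin k → Fin n // Meaningful n k g}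

/-! Write `A` for the `0/1` matrix of `ρ`. Expanding `1 ⬝ᵥ (A ^ k *ᵥ 1)` as a sum over
`(k+1)`-tuples of products of entries of `A` along consecutive pairs shows `f (k + 1) = 1 ⬝ᵥ (A ^ k *ᵥ 1)`.
For `n = 10` a finite computation shows that `x ^ 6 - 5 x ^ 4 + 6 x ^ 2 - 1` (with roots
`± 2 cos (j π / 7)`, `j = 1, 2, 3`) annihilates the all-ones vector under `A`, though not `A` itself;
the recurrence follows by applying `A ^ (k - 1)`. -/

open Matrix

theorem dotProduct_pow_mulVec_eq_sum_prod {α R : Type*} [Fintype α] [DecidableEq α]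
    [CommSemiring R] (M : Matrix α α R) (u v : α → R) (k : ℕ) :
    u ⬝ᵥ (M ^ k *ᵥ v) = ∑ g : Fin (k + 1) → α,
      u (g 0) * (∏ t : Fin k, M (g t.castSucc) (g t.succ)) * v (g (Fin.last k)) := by
  induction k generalizing u with
  | zero =>
    rw [pow_zero, one_mulVec, ← (Equiv.funUnique (Fin 1) α).symm.sum_comp]
    simp [dotProduct]
  | succ k ih =>
    rw [pow_succ', ← mulVec_mulVec, dotProduct_mulVec, ih,
      ← (Fin.consEquiv fun _ : Fin (k + 2) => α).sum_comp, Fintype.sum_prod_type_right]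
    refine Finset.sum_congr rfl fun h _ => ?_
    simp [Fin.prod_univ_succ, vecMul, dotProduct, Finset.sum_mul, mul_assoc]

def rhoMatrix (R : Type*) [Zero R] [One R] (n : ℕ) : Matrix (Fin n) (Fin n) R :=
  Matrix.of fun i j => if rho n (i + 1) (j + 1) then 1 else 0

theorem meaningful_succ_iff {n k : ℕ} (g : Fin (k + 1) → Fin n) :
    Meaningful n (k + 1) g ↔ ∀ t : Fin k, rho n (g t.castSucc + 1) (g t.succ + 1) :=
  Iff.rfl

theorem numComp_succ_eq (R : Type*) [CommSemiring R] (n k : ℕ) :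
    (numComp n (k + 1) : R) = 1 ⬝ᵥ (rhoMatrix R n ^ k *ᵥ 1) := by
  rw [dotProduct_pow_mulVec_eq_sum_prod, numComp, Fintype.card_subtype,
    Finset.natCast_card_filter (R := R)]
  simp [rhoMatrix, Finset.prod_boole, meaningful_succ_iff]

theorem rhoMatrix_ten_pow_six_mulVec_one :
    rhoMatrix ℤ 10 ^ 6 *ᵥ 1 =
      (5 : ℤ) • (rhoMatrix ℤ 10 ^ 4 *ᵥ 1) - (6 : ℤ) • (rhoMatrix ℤ 10 ^ 2 *ᵥ 1) + 1 := by
  decide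

/-- For `n = 10` and every `k ≥ 1`, the number of meaningful compositions
satisfies the recurrence f(k+6) = 5·f(k+4) − 6·f(k+2) + f(k). -/
theorem numComp_ten_recurrence (k : ℕ) (hk : 1 ≤ k) :
    (numComp 10 (k + 6) : ℤ) = 5 * numComp 10 (k + 4) - 6 * numComp 10 (k + 2) + numComp 10 k := by
  obtain ⟨m, rfl⟩ : ∃ m, k = m + 1 := ⟨k - 1, by omega⟩
  have hvec : rhoMatrix ℤ 10 ^ (m + 6) *ᵥ 1 = (5 : ℤ) • (rhoMatrix ℤ 10 ^ (m + 4) *ᵥ 1) -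
      (6 : ℤ) • (rhoMatrix ℤ 10 ^ (m + 2) *ᵥ 1) + rhoMatrix ℤ 10 ^ m *ᵥ 1 := by
    rw [pow_add, ← mulVec_mulVec, rhoMatrix_ten_pow_six_mulVec_one, mulVec_add, mulVec_sub,
      mulVec_smul, mulVec_smul, mulVec_mulVec, mulVec_mulVec, ← pow_add, ← pow_add, mulVec_one]
  rw [numComp_succ_eq ℤ 10 (m + 6), numComp_succ_eq ℤ 10 (m + 4), numComp_succ_eq ℤ 10 (m + 2),
    numComp_succ_eq ℤ 10 m, hvec]
  simp only [dotProduct_add, dotProduct_sub, dotProduct_smul, smul_eq_mul]
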